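/- arXiv:2405.07331 — 3 statements merged into one kernel-verified Lean document; each statement's English description precedes it below -/
import Mathlib

section
/- Let Θ* ∈ ℝ^{k×d} have unit-norm rows θ_1*, …, θ_k*, and let x* be a maximizer of f_{Θ*} over the unit sphere S^{d−1}. Then min_{i∈[k]} |θ_i*ᵀ x*| > 0, i.e., θ_i*ᵀ x* ≠ 0 for every i ∈ [k]. -/
open MeasureTheory

/-- ReLU activation g(z) = z·𝟙(z ≥ 0). -/
noncomputable def relu (z : ℝ) : ℝ := if 0 ≤ z then z else 0

/-- One-layer ReLU network f_Θ(x) = Σ_i g(θ_iᵀ x). -/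
noncomputable def reluNet {k d : ℕ} (Θ : Fin k → EuclideanSpace ℝ (Fin d))
    (x : EuclideanSpace ℝ (Fin d)) : ℝ :=
  ∑ i, relu (inner ℝ (Θ i) x : ℝ)

/-! If `θᵢ ⊥ x*`, push `x*` along `θᵢ` to `x* ± tθᵢ`. Both points have norm `√(1 + t²) ≤ 1 + t²/2`,
so by positive homogeneity the network is at most `(1 + t²/2) f(x*)` at each of them. On the other
hand every ReLU unit is midpoint convex, and unit `i`, sitting exactly at its kink, contributes
`g(t) + g(-t) = t` on top of `2 g(0)`; so the two values add up to at least `2 f(x*) + t`. This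
forces `t ≤ t² f(x*)`, which fails for small `t > 0`. -/

lemma relu_eq_max (z : ℝ) : relu z = max z 0 := by
  unfold relu
  split_ifs with h
  · exact (max_eq_left h).symm
  · exact (max_eq_right (not_le.mp h).le).symm

lemma relu_nonneg (z : ℝ) : 0 ≤ relu z := by
  rw [relu_eq_max]; exact le_max_right z 0

lemma relu_mul_of_nonneg {c : ℝ} (hc : 0 ≤ c) (z : ℝ) : relu (c * z) = c * relu z := by
  rw [relu_eq_max, relu_eq_max, mul_max_of_nonneg _ _ hc, mul_zero]

lemma two_mul_relu_le_relu_add_add_relu_sub (a b : ℝ) :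
    2 * relu a ≤ relu (a + b) + relu (a - b) := by
  simp only [relu_eq_max]
  calc 2 * max a 0 = max ((a + b) + (a - b)) (0 + 0) := by
        rw [mul_max_of_nonneg a 0 zero_le_two]; ring_nf
    _ ≤ max (a + b) 0 + max (a - b) 0 := max_add_add_le_max_add_max

lemma apply_le_norm_mul_of_homogeneous {E : Type*} [NormedAddCommGroup E] [NormedSpace ℝ E]
    {f : E → ℝ} {M : ℝ} (hf : ∀ c : ℝ, 0 ≤ c → ∀ x, f (c • x) = c * f x)
    (hM : ∀ x ∈ Metric.sphere (0 : E) 1, f x ≤ M) (y : E) : f y ≤ ‖y‖ * M := by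
  rcases eq_or_ne y 0 with rfl | hy
  · have hf0 : f 0 = 0 := by simpa using hf 0 le_rfl 0
    rw [hf0, norm_zero, zero_mul]
  have hny : 0 < ‖y‖ := norm_pos_iff.mpr hy
  have hunit : ‖y‖⁻¹ • y ∈ Metric.sphere (0 : E) 1 := by
    rw [mem_sphere_zero_iff_norm, norm_smul, norm_inv, norm_norm, inv_mul_cancel₀ hny.ne']
  calc f y = ‖y‖ * f (‖y‖⁻¹ • y) := by
        rw [hf _ (inv_nonneg.mpr hny.le), mul_inv_cancel_left₀ hny.ne']
    _ ≤ ‖y‖ * M := mul_le_mul_of_nonneg_left (hM _ hunit) hny.le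

lemma norm_add_le_one_add_sq_div_two {F : Type*} [NormedAddCommGroup F] [InnerProductSpace ℝ F]
    {x v : F} (hx : ‖x‖ = 1) (hxv : inner ℝ x v = 0) : ‖x + v‖ ≤ 1 + ‖v‖ ^ 2 / 2 := by
  have h := norm_add_sq_eq_norm_sq_add_norm_sq_real hxv
  rw [hx] at h
  nlinarith [norm_nonneg (x + v), sq_nonneg (‖x + v‖ - 1), sq_nonneg ‖v‖]

lemma norm_sub_le_one_add_sq_div_two {F : Type*} [NormedAddCommGroup F] [InnerProductSpace ℝ F]
    {x v : F} (hx : ‖x‖ = 1) (hxv : inner ℝ x v = 0) : ‖x - v‖ ≤ 1 + ‖v‖ ^ 2 / 2 := by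
  have h := norm_add_le_one_add_sq_div_two hx (v := -v) (by rwa [inner_neg_right, neg_eq_zero])
  rwa [norm_neg, ← sub_eq_add_neg] at h

section reluNet

variable {k d : ℕ} (Θ : Fin k → EuclideanSpace ℝ (Fin d))

lemma reluNet_smul_of_nonneg {c : ℝ} (hc : 0 ≤ c) (x : EuclideanSpace ℝ (Fin d)) :
    reluNet Θ (c • x) = c * reluNet Θ x := by
  simp only [reluNet, Finset.mul_sum, real_inner_smul_right, relu_mul_of_nonneg hc]

lemma two_mul_reluNet_add_abs_le {x : EuclideanSpace ℝ (Fin d)} {i : Fin k}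
    (hi : inner ℝ (Θ i) x = 0) (v : EuclideanSpace ℝ (Fin d)) :
    2 * reluNet Θ x + |inner ℝ (Θ i) v| ≤ reluNet Θ (x + v) + reluNet Θ (x - v) := by
  set gap : Fin k → ℝ := fun j =>
    relu (inner ℝ (Θ j) x + inner ℝ (Θ j) v) + relu (inner ℝ (Θ j) x - inner ℝ (Θ j) v)
      - 2 * relu (inner ℝ (Θ j) x)
  have hgap_nonneg : ∀ j ∈ Finset.univ, 0 ≤ gap j := fun j _ =>
    sub_nonneg.mpr (two_mul_relu_le_relu_add_add_relu_sub _ _)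
  have hgap_i : gap i = |inner ℝ (Θ i) v| := by
    simp only [gap, hi, zero_add, zero_sub, relu_eq_max, max_zero_add_max_neg_zero_eq_abs_self,
      max_self, mul_zero, sub_zero]
  have hgap_sum : ∑ j, gap j = reluNet Θ (x + v) + reluNet Θ (x - v) - 2 * reluNet Θ x := by
    simp only [gap, reluNet, inner_add_right, inner_sub_right, Finset.sum_sub_distrib,
      Finset.sum_add_distrib, Finset.mul_sum]
  linarith [hgap_i ▸ Finset.single_le_sum hgap_nonneg (Finset.mem_univ i)]

end reluNet

theorem stmt_2 (d k : ℕ)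
    (Θs : Fin k → EuclideanSpace ℝ (Fin d))
    (hΘs : ∀ i, ‖Θs i‖ = 1)
    (xs : EuclideanSpace ℝ (Fin d))
    (hxs : xs ∈ Metric.sphere (0 : EuclideanSpace ℝ (Fin d)) 1)
    (hmax : ∀ x ∈ Metric.sphere (0 : EuclideanSpace ℝ (Fin d)) 1,
      reluNet Θs x ≤ reluNet Θs xs) :
    ∀ i : Fin k, (inner ℝ (Θs i) xs : ℝ) ≠ 0 := by
  intro i hi
  rw [mem_sphere_zero_iff_norm] at hxs
  set M := reluNet Θs xs
  have hM : 0 ≤ M := Finset.sum_nonneg fun j _ => relu_nonneg _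
  have hbound : ∀ y, reluNet Θs y ≤ ‖y‖ * M :=
    apply_le_norm_mul_of_homogeneous (fun _ hc => reluNet_smul_of_nonneg Θs hc) hmax
  set t : ℝ := (M + 1)⁻¹
  have ht : 0 < t := by positivity
  set v := t • Θs i
  have hv : ‖v‖ = t := by rw [norm_smul, hΘs i, mul_one, Real.norm_of_nonneg ht.le]
  have hθv : inner ℝ (Θs i) v = t := by
    rw [real_inner_smul_right, real_inner_self_eq_norm_sq, hΘs i, one_pow, mul_one]
  have hxv : inner ℝ xs v = 0 := by rw [real_inner_smul_right, real_inner_comm, hi, mul_zero]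
  have hgain := two_mul_reluNet_add_abs_le Θs hi v
  have hplus := (hbound (xs + v)).trans (mul_le_mul_of_nonneg_right
    (norm_add_le_one_add_sq_div_two hxs hxv) hM)
  have hminus := (hbound (xs - v)).trans (mul_le_mul_of_nonneg_right
    (norm_sub_le_one_add_sq_div_two hxs hxv) hM)
  rw [hθv, abs_of_pos ht] at hgain
  rw [hv] at hplus hminus
  have hquadratic : t ≤ t * (t * M) := by linarith
  have htM : t * M < 1 := by
    rw [inv_mul_lt_one₀ (by positivity)]; linarith
  linarith [mul_lt_mul_of_pos_left htM ht]
end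

section
/- Let Θ* ∈ ℝ^{k×d} have unit-norm rows θ_1*, …, θ_k*, let Θ̃ ∈ ℝ^{k×d} have rows θ̃_1, …, θ̃_k, and let 0 < ν < 2. Suppose for every i ∈ [k], either ‖θ̃_i − θ_i*‖₂ ≤ ν/2 or ‖θ̃_i + θ_i*‖₂ ≤ ν/2. Then for every x ∈ S^{d−1} with |θ̃_iᵀx| ≥ ν/2 for all i ∈ [k], the following identity holds: f_{Θ*}(x) = Σ_{i∈[k]} 𝟙(θ̃_iᵀx ≥ 0) · θ_i*ᵀx + Σ_{i∈[k]} 2·𝟙(‖θ̃_i + θ_i*‖₂ ≤ ν/2) · (1/2 − 𝟙(θ̃_iᵀx ≥ 0)) · θ_i*ᵀx. -/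
lemma relu_sub_relu_neg (s : ℝ) : relu s - relu (-s) = s := by
  unfold relu
  split_ifs <;> linarith

lemma relu_eq_ite_mul_of_abs_sub_le {t s : ℝ} (h : |t - s| ≤ |t|) :
    relu s = (if 0 ≤ t then 1 else 0) * s := by
  rw [abs_le] at h
  unfold relu
  by_cases ht : 0 ≤ t
  · rw [abs_of_nonneg ht] at h
    rw [if_pos (by linarith), if_pos ht, one_mul]
  · rw [abs_of_neg (not_le.mp ht)] at h
    rw [if_neg ht, zero_mul]
    split_ifs <;> linarith

lemma relu_eq_ite_mul_of_abs_add_le {t s : ℝ} (h : |t + s| ≤ |t|) :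
    relu s = (1 - if 0 ≤ t then 1 else 0) * s := by
  have hneg := relu_eq_ite_mul_of_abs_sub_le (s := -s) (by rwa [sub_neg_eq_add])
  linarith [relu_sub_relu_neg s]

lemma two_mul_norm_le_norm_sub_add_norm_add {E : Type*} [SeminormedAddCommGroup E]
    [NormedSpace ℝ E] (a b : E) : 2 * ‖b‖ ≤ ‖a - b‖ + ‖a + b‖ := by
  calc 2 * ‖b‖ = ‖(a + b) - (a - b)‖ := by
        rw [add_sub_sub_cancel, ← two_smul ℝ b, norm_smul, Real.norm_two]
    _ ≤ ‖a + b‖ + ‖a - b‖ := norm_sub_le _ _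
    _ = ‖a - b‖ + ‖a + b‖ := add_comm _ _

section InnerProduct

variable {E : Type*} [NormedAddCommGroup E] [InnerProductSpace ℝ E]

lemma abs_inner_sub_inner_le_norm_sub {x : E} (hx : ‖x‖ ≤ 1) (a b : E) :
    |inner ℝ a x - inner ℝ b x| ≤ ‖a - b‖ := by
  rw [← inner_sub_left]
  exact (abs_real_inner_le_norm _ _).trans (mul_le_of_le_one_right (norm_nonneg _) hx)

lemma abs_inner_add_inner_le_norm_add {x : E} (hx : ‖x‖ ≤ 1) (a b : E) :
    |inner ℝ a x + inner ℝ b x| ≤ ‖a + b‖ := by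
  simpa [inner_neg_left] using abs_inner_sub_inner_le_norm_sub hx a (-b)

lemma relu_inner_eq_of_close {θs θt x : E} {ν : ℝ} (hθs : ‖θs‖ = 1) (hν2 : ν < 2)
    (hclose : ‖θt - θs‖ ≤ ν / 2 ∨ ‖θt + θs‖ ≤ ν / 2) (hx : ‖x‖ ≤ 1)
    (hgap : ν / 2 ≤ |inner ℝ θt x|) :
    relu (inner ℝ θs x) =
      (if 0 ≤ inner ℝ θt x then 1 else 0) * inner ℝ θs x
        + 2 * (if ‖θt + θs‖ ≤ ν / 2 then 1 else 0) *
          (1 / 2 - if 0 ≤ inner ℝ θt x then 1 else 0) * inner ℝ θs x := by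
  rcases hclose with hminus | hplus
  · have hnot_plus : ¬ ‖θt + θs‖ ≤ ν / 2 := fun hplus => by
      linarith [two_mul_norm_le_norm_sub_add_norm_add θt θs]
    rw [if_neg hnot_plus, relu_eq_ite_mul_of_abs_sub_le
      ((abs_inner_sub_inner_le_norm_sub hx θt θs).trans (hminus.trans hgap))]
    ring
  · rw [if_pos hplus, relu_eq_ite_mul_of_abs_add_le
      ((abs_inner_add_inner_le_norm_add hx θt θs).trans (hplus.trans hgap))]
    ring

end InnerProduct

theorem stmt_15_general (d k : ℕ)
    (Θs Θt : Fin k → EuclideanSpace ℝ (Fin d))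
    (hΘs : ∀ i, ‖Θs i‖ = 1)
    (ν : ℝ) (hν2 : ν < 2)
    (hclose : ∀ i : Fin k, ‖Θt i - Θs i‖ ≤ ν / 2 ∨ ‖Θt i + Θs i‖ ≤ ν / 2) :
    ∀ x ∈ Metric.sphere (0 : EuclideanSpace ℝ (Fin d)) 1,
      (∀ i : Fin k, ν / 2 ≤ |(inner ℝ (Θt i) x : ℝ)|) →
      reluNet Θs x =
        (∑ i : Fin k, (if (0:ℝ) ≤ (inner ℝ (Θt i) x : ℝ) then (1:ℝ) else 0) *
          (inner ℝ (Θs i) x : ℝ))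
        + ∑ i : Fin k, 2 * (if ‖Θt i + Θs i‖ ≤ ν / 2 then (1:ℝ) else 0) *
          (1 / 2 - (if (0:ℝ) ≤ (inner ℝ (Θt i) x : ℝ) then (1:ℝ) else 0)) *
          (inner ℝ (Θs i) x : ℝ) := by
  intro x hx hgap
  have hx_norm : ‖x‖ ≤ 1 := (mem_sphere_zero_iff_norm.mp hx).le
  rw [← Finset.sum_add_distrib]
  exact Finset.sum_congr rfl fun i _ =>
    relu_inner_eq_of_close (hΘs i) hν2 (hclose i) hx_norm (hgap i)

theorem stmt_15 (d k : ℕ)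
    (Θs Θt : Fin k → EuclideanSpace ℝ (Fin d))
    (hΘs : ∀ i, ‖Θs i‖ = 1)
    (ν : ℝ) (hν : 0 < ν) (hν2 : ν < 2)
    (hclose : ∀ i : Fin k, ‖Θt i - Θs i‖ ≤ ν / 2 ∨ ‖Θt i + Θs i‖ ≤ ν / 2) :
    ∀ x ∈ Metric.sphere (0 : EuclideanSpace ℝ (Fin d)) 1,
      (∀ i : Fin k, ν / 2 ≤ |(inner ℝ (Θt i) x : ℝ)|) →
      reluNet Θs x =
        (∑ i : Fin k, (if (0:ℝ) ≤ (inner ℝ (Θt i) x : ℝ) then (1:ℝ) else 0) *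
          (inner ℝ (Θs i) x : ℝ))
        + ∑ i : Fin k, 2 * (if ‖Θt i + Θs i‖ ≤ ν / 2 then (1:ℝ) else 0) *
          (1 / 2 - (if (0:ℝ) ≤ (inner ℝ (Θt i) x : ℝ) then (1:ℝ) else 0)) *
          (inner ℝ (Θs i) x : ℝ) :=
  stmt_15_general d k Θs Θt hΘs ν hν2 hclose
end

section
/- Let Θ* ∈ ℝ^{k×d} have unit-norm rows θ_1*, …, θ_k*, and let x* be a maximizer of f_{Θ*} over the unit sphere S^{d−1}. Let A = { i ∈ [k] : θ_i*ᵀx* > 0 } and θ̄_A = Σ_{i∈A} θ_i*. Then A is nonempty, θ̄_A ≠ 0, and x* = θ̄_A / ‖θ̄_A‖₂, i.e., the aggregate of the activated neurons is a positive multiple of the optimal action. -/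
open MeasureTheory

lemma le_relu (z : ℝ) : z ≤ relu z := relu_eq_max z ▸ le_max_left z 0

lemma relu_of_pos {z : ℝ} (h : 0 < z) : relu z = z := by
  rw [relu_eq_max, max_eq_left h.le]

lemma relu_of_nonpos {z : ℝ} (h : z ≤ 0) : relu z = 0 := by
  rw [relu_eq_max, max_eq_right h]

lemma eq_inv_norm_smul_of_norm_le_inner {F : Type*} [NormedAddCommGroup F]
    [InnerProductSpace ℝ F] {x v : F} (hx : ‖x‖ = 1) (hv : v ≠ 0) (h : ‖v‖ ≤ inner ℝ v x) :
    x = ‖v‖⁻¹ • v := by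
  have hv' : 0 < ‖v‖ := norm_pos_iff.mpr hv
  have hu : ‖‖v‖⁻¹ • v‖ = 1 := by
    rw [norm_smul, norm_inv, norm_norm, inv_mul_cancel₀ hv'.ne']
  have hle : inner ℝ (‖v‖⁻¹ • v) x ≤ 1 := real_inner_le_one_of_norm_eq_one hu hx
  have hge : 1 ≤ inner ℝ (‖v‖⁻¹ • v) x := by
    rw [real_inner_smul_left, ← div_eq_inv_mul, one_le_div hv']
    exact h
  exact ((inner_eq_one_iff_of_norm_eq_one hu hx).mp (le_antisymm hle hge)).symm

section ReluNet

variable {k d : ℕ} (Θ : Fin k → EuclideanSpace ℝ (Fin d))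

noncomputable def activeSet (x : EuclideanSpace ℝ (Fin d)) : Finset (Fin k) :=
  Finset.univ.filter fun i => 0 < (inner ℝ (Θ i) x : ℝ)

lemma reluNet_eq_inner_sum_activeSet (x : EuclideanSpace ℝ (Fin d)) :
    reluNet Θ x = inner ℝ (∑ i ∈ activeSet Θ x, Θ i) x := by
  rw [sum_inner, activeSet, Finset.sum_filter, reluNet]
  refine Finset.sum_congr rfl fun i _ => ?_
  split_ifs with h
  · exact relu_of_pos h
  · exact relu_of_nonpos (not_lt.mp h)

lemma inner_sum_le_reluNet (s : Finset (Fin k)) (y : EuclideanSpace ℝ (Fin d)) :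
    inner ℝ (∑ i ∈ s, Θ i) y ≤ reluNet Θ y := by
  rw [sum_inner, reluNet]
  calc ∑ i ∈ s, inner ℝ (Θ i) y ≤ ∑ i ∈ s, relu (inner ℝ (Θ i) y) :=
        Finset.sum_le_sum fun i _ => le_relu _
    _ ≤ ∑ i, relu (inner ℝ (Θ i) y) :=
        Finset.sum_le_sum_of_subset_of_nonneg (Finset.subset_univ s)
          fun i _ _ => relu_nonneg _

lemma one_le_reluNet_self {i : Fin k} (hi : ‖Θ i‖ = 1) : 1 ≤ reluNet Θ (Θ i) := by
  have h := inner_sum_le_reluNet Θ {i} (Θ i)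
  rwa [Finset.sum_singleton, real_inner_self_eq_norm_sq, hi, one_pow] at h

end ReluNet

theorem stmt_19 (d k : ℕ) (hk : 1 ≤ k)
    (Θs : Fin k → EuclideanSpace ℝ (Fin d))
    (hΘs : ∀ i, ‖Θs i‖ = 1)
    (xs : EuclideanSpace ℝ (Fin d))
    (hxs : xs ∈ Metric.sphere (0 : EuclideanSpace ℝ (Fin d)) 1)
    (hmax : ∀ x ∈ Metric.sphere (0 : EuclideanSpace ℝ (Fin d)) 1,
      reluNet Θs x ≤ reluNet Θs xs) :
    (Finset.univ.filter (fun i : Fin k => 0 < (inner ℝ (Θs i) xs : ℝ))).Nonempty ∧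
    (∑ i ∈ Finset.univ.filter (fun i : Fin k => 0 < (inner ℝ (Θs i) xs : ℝ)), Θs i) ≠ 0 ∧
    xs = ‖∑ i ∈ Finset.univ.filter (fun i : Fin k => 0 < (inner ℝ (Θs i) xs : ℝ)), Θs i‖⁻¹ •
      (∑ i ∈ Finset.univ.filter (fun i : Fin k => 0 < (inner ℝ (Θs i) xs : ℝ)), Θs i) := by
  change (activeSet Θs xs).Nonempty ∧ ∑ i ∈ activeSet Θs xs, Θs i ≠ 0 ∧
    xs = ‖∑ i ∈ activeSet Θs xs, Θs i‖⁻¹ • ∑ i ∈ activeSet Θs xs, Θs i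
  set v := ∑ i ∈ activeSet Θs xs, Θs i
  have hxs_norm : ‖xs‖ = 1 := mem_sphere_zero_iff_norm.mp hxs
  have hval : reluNet Θs xs = inner ℝ v xs := reluNet_eq_inner_sum_activeSet Θs xs
  have hv : v ≠ 0 := by
    let i₀ : Fin k := ⟨0, hk⟩
    have hpos : 0 < reluNet Θs xs := lt_of_lt_of_le one_pos <|
      (one_le_reluNet_self Θs (hΘs i₀)).trans (hmax _ (by simp [hΘs i₀]))
    rintro hv0
    rw [hval, hv0, inner_zero_left] at hpos
    exact lt_irrefl 0 hpos
  have hunit : ‖v‖⁻¹ • v ∈ Metric.sphere (0 : EuclideanSpace ℝ (Fin d)) 1 := by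
    rw [mem_sphere_zero_iff_norm, norm_smul, norm_inv, norm_norm,
      inv_mul_cancel₀ (norm_ne_zero_iff.mpr hv)]
  have hle : ‖v‖ ≤ inner ℝ v xs :=
    calc ‖v‖ = inner ℝ v (‖v‖⁻¹ • v) := by
          rw [real_inner_smul_right, real_inner_self_eq_norm_sq]
          field_simp
      _ ≤ reluNet Θs (‖v‖⁻¹ • v) := inner_sum_le_reluNet Θs _ _
      _ ≤ inner ℝ v xs := hval ▸ hmax _ hunit
  exact ⟨Finset.nonempty_of_sum_ne_zero hv, hv,
    eq_inv_norm_smul_of_norm_le_inner hxs_norm hv hle⟩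
end
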